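/- Theorem 4: For every R-expression S, ⊢ S̄ ⇔ˢ S in SC∞; that is, the four R-expressions S̄ ⇒ S, S ⇒ S̄, −S̄ ⇒ −S, and −S ⇒ −S̄ are derivable in SC∞ from no premises, where S̄ is the formula translation of S. -/

import Mathlib

/-- Formulas of the connexive logic C: propositional variables, strong
negation `∼`, conjunction, disjunction and implication. -/
inductive Formula : Type
  | var : Nat → Formula
  | snot : Formula → Formula
  | and : Formula → Formula → Formula
  | or : Formula → Formula → Formula
  | imp : Formula → Formula → Formula
deriving DecidableEq

/-- R-expressions over the language of C.  `fm A` is the formula `A`,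
`negFm A` is `−A`, `seq Δ S` is `(Δ ⇒ S)` and `negSeq Δ S` is `−(Δ ⇒ S)`.
The convention `−−S = S` is implemented by the involution `rneg`. -/
inductive RExpr : Type
  | fm : Formula → RExpr
  | negFm : Formula → RExpr
  | seq : List RExpr → RExpr → RExpr
  | negSeq : List RExpr → RExpr → RExpr

/-- The refutation `−S` of an R-expression, with `−−S = S`. -/
def rneg : RExpr → RExpr
  | .fm A => .negFm A
  | .negFm A => .fm A
  | .seq Δ S => .negSeq Δ S
  | .negSeq Δ S => .seq Δ S

/-- Derivability in the higher-order sequent calculus `SC∞` from a set `P`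
of R-expressions taken as additional premises. -/
inductive SC (P : Set RExpr) : RExpr → Prop
  | prem {S} : S ∈ P → SC P S
  | rf (S) : SC P (.seq [S] S)
  | wl {Δ S} (T) : SC P (.seq Δ S) → SC P (.seq (Δ ++ [T]) S)
  | pl {U} (Δ S T Γ) : SC P (.seq (Δ ++ S :: T :: Γ) U) → SC P (.seq (Δ ++ T :: S :: Γ) U)
  | cl {Δ S T} : SC P (.seq (Δ ++ [S, S]) T) → SC P (.seq (Δ ++ [S]) T)
  | cut {Δ S T} : SC P (.seq Δ S) → SC P (.seq (Δ ++ [S]) T) → SC P (.seq Δ T)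
  | riP {Γ Δ S} : SC P (.seq (Γ ++ Δ) S) → SC P (.seq Γ (.seq Δ S))
  | liP {Γ Δ S T} : (∀ U ∈ Δ, SC P (.seq Γ U)) → SC P (.seq (Γ ++ [S]) T) →
      SC P (.seq (Γ ++ [.seq Δ S]) T)
  | riN {Δ Γ S} : SC P (.seq (Δ ++ Γ) (rneg S)) → SC P (.seq Δ (rneg (.seq Γ S)))
  | riN' {Δ Γ S} : SC P (.seq Δ (rneg (.seq Γ S))) → SC P (.seq (Δ ++ Γ) (rneg S))
  | liN {Δ Γ S T} : (∀ U ∈ Γ, SC P (.seq Δ U)) → SC P (.seq (Δ ++ [rneg S]) T) →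
      SC P (.seq (Δ ++ [rneg (.seq Γ S)]) T)
  | snotL {Δ A S} : SC P (.seq (Δ ++ [.negFm A]) S) → SC P (.seq (Δ ++ [.fm (.snot A)]) S)
  | snotR {Δ A} : SC P (.seq Δ (.negFm A)) → SC P (.seq Δ (.fm (.snot A)))
  | snotLm {Δ A S} : SC P (.seq (Δ ++ [.fm A]) S) → SC P (.seq (Δ ++ [.negFm (.snot A)]) S)
  | snotRm {Δ A} : SC P (.seq Δ (.fm A)) → SC P (.seq Δ (.negFm (.snot A)))
  | andL {Δ A B S} : SC P (.seq (Δ ++ [.fm A, .fm B]) S) → SC P (.seq (Δ ++ [.fm (.and A B)]) S)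
  | andR {Δ A B} : SC P (.seq Δ (.fm A)) → SC P (.seq Δ (.fm B)) → SC P (.seq Δ (.fm (.and A B)))
  | andLm {Δ A B S} : SC P (.seq (Δ ++ [.negFm A]) S) → SC P (.seq (Δ ++ [.negFm B]) S) →
      SC P (.seq (Δ ++ [.negFm (.and A B)]) S)
  | andRm₁ {Δ A B} : SC P (.seq Δ (.negFm A)) → SC P (.seq Δ (.negFm (.and A B)))
  | andRm₂ {Δ A B} : SC P (.seq Δ (.negFm B)) → SC P (.seq Δ (.negFm (.and A B)))
  | orL {Δ A B S} : SC P (.seq (Δ ++ [.fm A]) S) → SC P (.seq (Δ ++ [.fm B]) S) →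
      SC P (.seq (Δ ++ [.fm (.or A B)]) S)
  | orR₁ {Δ A B} : SC P (.seq Δ (.fm A)) → SC P (.seq Δ (.fm (.or A B)))
  | orR₂ {Δ A B} : SC P (.seq Δ (.fm B)) → SC P (.seq Δ (.fm (.or A B)))
  | orLm {Δ A B S} : SC P (.seq (Δ ++ [.negFm A, .negFm B]) S) →
      SC P (.seq (Δ ++ [.negFm (.or A B)]) S)
  | orRm {Δ A B} : SC P (.seq Δ (.negFm A)) → SC P (.seq Δ (.negFm B)) →
      SC P (.seq Δ (.negFm (.or A B)))
  | impL {Δ A B S} : SC P (.seq (Δ ++ [.seq [.fm A] (.fm B)]) S) →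
      SC P (.seq (Δ ++ [.fm (.imp A B)]) S)
  | impR {Δ A B} : SC P (.seq Δ (.seq [.fm A] (.fm B))) → SC P (.seq Δ (.fm (.imp A B)))
  | impLm {Δ A B S} : SC P (.seq (Δ ++ [.negSeq [.fm A] (.fm B)]) S) →
      SC P (.seq (Δ ++ [.negFm (.imp A B)]) S)
  | impRm {Δ A B} : SC P (.seq Δ (.negSeq [.fm A] (.fm B))) → SC P (.seq Δ (.negFm (.imp A B)))

/-- `S ⇔ˢ T` relative to the premise set `P`: the four R-expressions
`S ⇒ T`, `T ⇒ S`, `−S ⇒ −T`, `−T ⇒ −S` are each derivable from `P`. -/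
def StrictEquiv (P : Set RExpr) (S T : RExpr) : Prop :=
  SC P (.seq [S] T) ∧ SC P (.seq [T] S) ∧
  SC P (.seq [rneg S] (rneg T)) ∧ SC P (.seq [rneg T] (rneg S))

/-- The four R-expressions constituting `S ⇔ˢ T`, taken as premises. -/
def equivPrems (S T : RExpr) : Set RExpr :=
  {RExpr.seq [S] T, RExpr.seq [T] S, RExpr.seq [rneg S] (rneg T), RExpr.seq [rneg T] (rneg S)}
/-- `S̄₁ ∧ … ∧ S̄ₙ`: conjunction of a nonempty list given as head and tail. -/
def conjList (A : Formula) (l : List Formula) : Formula :=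
  l.foldl .and A

mutual
/-- The formula translation `S̄` of an R-expression `S`. -/
def bar : RExpr → Formula
  | .fm A => A
  | .negFm A => .snot A
  | .seq [] S => bar S
  | .seq (U :: Γ) S => .imp (conjList (bar U) (barList Γ)) (bar S)
  | .negSeq [] S => .snot (bar S)
  | .negSeq (U :: Γ) S => .snot (.imp (conjList (bar U) (barList Γ)) (bar S))

def barList : List RExpr → List Formula
  | [] => []
  | S :: Δ => bar S :: barList Δ
end

section Aux

variable {P : Set RExpr}

/-- Iterated left weakening. -/
lemma SC.wlStar {Δ : List RExpr} {S : RExpr} (Θ : List RExpr)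
    (h : SC P (.seq Δ S)) : SC P (.seq (Δ ++ Θ) S) := by
  induction Θ generalizing Δ with
  | nil => simpa using h
  | cons a Θ ih =>
    have := ih (Δ := Δ ++ [a]) (SC.wl a h)
    simpa using this

/-- Moving the last formula of the antecedent to an arbitrary position. -/
lemma SC.moveLast {S a : RExpr} :
    ∀ (Δ₀ Δ₁ : List RExpr), SC P (.seq (Δ₀ ++ Δ₁ ++ [a]) S) →
      SC P (.seq (Δ₀ ++ a :: Δ₁) S) := by
  intro Δ₀ Δ₁
  induction Δ₁ generalizing Δ₀ with
  | nil => intro h; simpa using h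
  | cons b Δ₁ ih =>
    intro h
    have h1 : SC P (.seq ((Δ₀ ++ [b]) ++ a :: Δ₁) S) := by
      apply ih; simpa using h
    have h2 : SC P (.seq (Δ₀ ++ b :: a :: Δ₁) S) := by simpa using h1
    have := SC.pl (U := S) Δ₀ b a Δ₁ h2
    simpa using this

/-- Weakening at the front. -/
lemma SC.consL {Δ : List RExpr} {S : RExpr} (a : RExpr)
    (h : SC P (.seq Δ S)) : SC P (.seq (a :: Δ) S) := by
  have := SC.moveLast (P := P) [] Δ (by simpa using SC.wl a h)
  simpa using this

/-- Any member of the antecedent is derivable. -/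
lemma SC.memberSeq {x : RExpr} : ∀ {Δ : List RExpr}, x ∈ Δ → SC P (.seq Δ x) := by
  intro Δ
  induction Δ with
  | nil => simp
  | cons a Δ ih =>
    intro h
    rcases List.mem_cons.1 h with h | h
    · subst h
      have := SC.wlStar (P := P) (Δ := [x]) Δ (SC.rf x)
      simpa using this
    · exact SC.consL a (ih h)

/-- Iterated weakening at the front. -/
lemma SC.consLStar {Δ : List RExpr} {S : RExpr} (Θ : List RExpr)
    (h : SC P (.seq Δ S)) : SC P (.seq (Θ ++ Δ) S) := by
  induction Θ with
  | nil => simpa using h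
  | cons a Θ ih => exact SC.consL a ih

/-- Monotonicity: derivability only depends on the set of antecedent members.
This packages weakening, exchange and contraction. -/
lemma SC.mono {Δ Δ' : List RExpr} {S : RExpr} (h : SC P (.seq Δ S))
    (sub : ∀ x ∈ Δ, x ∈ Δ') : SC P (.seq Δ' S) := by
  have h1 : SC P (.seq Δ' (.seq Δ S)) := SC.riP (SC.consLStar Δ' h)
  have h3 : SC P (.seq (Δ' ++ [S]) S) := SC.memberSeq (by simp)
  have h4 : SC P (.seq (Δ' ++ [.seq Δ S]) S) :=
    SC.liP (fun U hU => SC.memberSeq (sub U hU)) h3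
  exact SC.cut h1 h4

/-- Introduction of an iterated conjunction. -/
lemma SC.conjIntro {Δ : List RExpr} :
    ∀ {A : Formula} (l : List Formula),
      SC P (.seq Δ (.fm A)) → (∀ B ∈ l, SC P (.seq Δ (.fm B))) →
      SC P (.seq Δ (.fm (conjList A l))) := by
  intro A l
  induction l generalizing A with
  | nil => intro hA _; simpa [conjList] using hA
  | cons b l ih =>
    intro hA hl
    have heq : conjList A (b :: l) = conjList (A.and b) l := rfl
    rw [heq]
    exact ih (SC.andR hA (hl b (by simp))) (fun B hB => hl B (by simp [hB]))

/-- Elimination of an iterated conjunction on the left. -/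
lemma SC.conjElimAll {Δ : List RExpr} {S : RExpr} :
    ∀ {A : Formula} (l : List Formula),
      SC P (.seq (Δ ++ .fm A :: l.map .fm) S) →
      SC P (.seq (Δ ++ [.fm (conjList A l)]) S) := by
  intro A l
  induction l generalizing A with
  | nil => intro h; simpa [conjList] using h
  | cons b l ih =>
    intro h
    have h1 : SC P (.seq ((Δ ++ l.map .fm) ++ [.fm A, .fm b]) S) :=
      SC.mono h (by intro x hx; simp at hx ⊢; aesop)
    have h2 : SC P (.seq ((Δ ++ l.map .fm) ++ [.fm (A.and b)]) S) := SC.andL h1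
    have h3 : SC P (.seq (Δ ++ .fm (A.and b) :: l.map .fm) S) :=
      SC.mono h2 (by intro x hx; simp at hx ⊢; aesop)
    have heq : conjList A (b :: l) = conjList (A.and b) l := rfl
    rw [heq]
    exact ih h3

lemma barList_eq_map : ∀ Γ : List RExpr, barList Γ = Γ.map bar
  | [] => rfl
  | S :: Δ => by rw [barList, barList_eq_map Δ]; rfl

lemma bar_negSeq (Γ : List RExpr) (T : RExpr) :
    bar (.negSeq Γ T) = .snot (bar (.seq Γ T)) := by
  cases Γ <;> rfl

/-- The statement proved by induction: the four sequents of `S̄ ⇔ˢ S`. -/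
def Good (S : RExpr) : Prop := StrictEquiv ∅ (.fm (bar S)) S

lemma good_iff (S : RExpr) : Good S ↔
    (SC ∅ (.seq [.fm (bar S)] S) ∧ SC ∅ (.seq [S] (.fm (bar S))) ∧
     SC ∅ (.seq [.negFm (bar S)] (rneg S)) ∧ SC ∅ (.seq [rneg S] (.negFm (bar S)))) := by
  rfl

lemma good_fm (A : Formula) : Good (.fm A) :=
  ⟨SC.rf _, SC.rf _, SC.rf _, SC.rf _⟩

lemma good_negFm (A : Formula) : Good (.negFm A) := by
  refine ⟨?_, ?_, ?_, ?_⟩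
  · simpa [bar] using SC.snotL (Δ := []) (by simpa using SC.rf (P := (∅ : Set RExpr)) (.negFm A))
  · exact SC.snotR (SC.rf _)
  · simpa [bar, rneg] using SC.snotLm (Δ := []) (by simpa [rneg] using SC.rf (P := (∅ : Set RExpr)) (.fm A))
  · exact SC.snotRm (SC.rf _)

lemma good_seq (Γ : List RExpr) (T : RExpr) (ih : ∀ U ∈ T :: Γ, Good U) :
    Good (.seq Γ T) := by
  have ihT : Good T := ih T (by simp)
  obtain ⟨ihT1, ihT2, ihT3, ihT4⟩ := ihT
  cases Γ with
  | nil =>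
    refine ⟨?_, ?_, ?_, ?_⟩
    · exact SC.riP (Γ := [.fm (bar T)]) (Δ := []) (by simpa using ihT1)
    · exact SC.liP (Γ := []) (Δ := []) (by simp) (by simpa [bar] using ihT2)
    · exact SC.riN (Δ := [.negFm (bar T)]) (Γ := []) (S := T) (by simpa [rneg] using ihT3)
    · exact SC.liN (Δ := []) (Γ := []) (S := T) (by simp) (by simpa [bar] using ihT4)
  | cons U₀ Γ' =>
    set Γ : List RExpr := U₀ :: Γ' with hΓ
    set C : Formula := conjList (bar U₀) (barList Γ') with hC
    set mbar : List RExpr := Γ.map (fun U => RExpr.fm (bar U)) with hmbar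
    have hbar : bar (.seq Γ T) = .imp C (bar T) := rfl
    have hmbar_eq : RExpr.fm (bar U₀) :: (barList Γ').map .fm = mbar := by
      simp [hmbar, hΓ, barList_eq_map, Function.comp]
    -- (i) Γ proves the conjunction of the translations
    have hconj : SC ∅ (.seq Γ (.fm C)) := by
      refine SC.conjIntro (barList Γ') ?_ ?_
      · exact SC.mono (ih U₀ (by simp [hΓ])).2.1 (by simp [hΓ])
      · intro B hB
        rw [barList_eq_map] at hB
        rcases List.mem_map.1 hB with ⟨V, hV, rfl⟩
        exact SC.mono (ih V (by simp [hΓ, hV])).2.1 (by simp [hΓ, hV])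
    -- each member of Γ follows from the list of translations
    have hmem : ∀ V ∈ Γ, SC ∅ (.seq mbar V) := by
      intro V hV
      exact SC.mono (ih V (by simp [hV])).1
        (by
          intro x hx; simp at hx; subst hx
          exact List.mem_map.2 ⟨V, hV, rfl⟩)
    refine ⟨?_, ?_, ?_, ?_⟩
    -- Claim 1 : S̄ ⇒ S
    · rw [hbar]
      apply SC.riP (Γ := [.fm (.imp C (bar T))]) (Δ := Γ)
      refine SC.mono (Δ := Γ ++ [.fm (.imp C (bar T))]) ?_ (by intro x hx; simp at hx ⊢; aesop)
      apply SC.impL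
      exact SC.liP (by simpa using hconj)
        (SC.mono ihT1 (by intro x hx; simp at hx ⊢; aesop))
    -- Claim 2 : S ⇒ S̄
    · rw [hbar]
      apply SC.impR
      have : SC ∅ (.seq ([RExpr.seq Γ T] ++ [.fm C]) (.fm (bar T))) := by
        apply SC.conjElimAll (Δ := [RExpr.seq Γ T]) (barList Γ')
        have hkey : SC ∅ (.seq (mbar ++ [RExpr.seq Γ T]) (.fm (bar T))) :=
          SC.liP hmem (SC.mono ihT2 (by intro x hx; simp at hx ⊢; aesop))
        refine SC.mono hkey ?_
        intro x hx
        rw [hmbar_eq]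
        simp at hx ⊢; aesop
      exact SC.riP (Γ := [RExpr.seq Γ T]) (Δ := [.fm C]) this
    -- Claim 3 : −S̄ ⇒ −S
    · rw [hbar]
      have h0 : SC ∅ (.seq (Γ ++ [RExpr.negSeq [.fm C] (.fm (bar T))]) (rneg T)) :=
        SC.liN (Γ := [.fm C]) (S := .fm (bar T)) (by simpa using hconj)
          (SC.mono ihT3 (by intro x hx; simp at hx ⊢; aesop))
      have h1 : SC ∅ (.seq ([RExpr.negSeq [.fm C] (.fm (bar T))] ++ Γ) (rneg T)) :=
        SC.mono h0 (by intro x hx; simp at hx ⊢; aesop)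
      have h2 : SC ∅ (.seq [RExpr.negSeq [.fm C] (.fm (bar T))] (rneg (.seq Γ T))) :=
        SC.riN h1
      exact SC.impLm (Δ := []) (by simpa using h2)
    -- Claim 4 : −S ⇒ −S̄
    · rw [hbar]
      apply SC.impRm
      have hkey : SC ∅ (.seq (mbar ++ [rneg (RExpr.seq Γ T)]) (.negFm (bar T))) :=
        SC.liN (Γ := Γ) (S := T) hmem
          (SC.mono ihT4 (by intro x hx; simp at hx ⊢; aesop))
      have h1 : SC ∅ (.seq ([RExpr.negSeq Γ T] ++ .fm (bar U₀) :: (barList Γ').map .fm)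
          (.negFm (bar T))) := by
        refine SC.mono hkey ?_
        intro x hx
        rw [hmbar_eq]
        simp at hx ⊢; aesop
      have h2 : SC ∅ (.seq ([RExpr.negSeq Γ T] ++ [.fm C]) (.negFm (bar T))) :=
        SC.conjElimAll (barList Γ') h1
      exact SC.riN (Δ := [RExpr.negSeq Γ T]) (Γ := [.fm C]) (S := .fm (bar T)) h2

lemma good_negSeq (Γ : List RExpr) (T : RExpr) (ih : ∀ U ∈ T :: Γ, Good U) :
    Good (.negSeq Γ T) := by
  obtain ⟨E1, E2, E3, E4⟩ := good_seq Γ T ih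
  rw [good_iff, bar_negSeq]
  exact ⟨SC.snotL (Δ := []) (by simpa [rneg] using E3), SC.snotR E4,
    SC.snotLm (Δ := []) (by simpa [rneg] using E1), SC.snotRm E2⟩

lemma good_all : ∀ (n : Nat) (S : RExpr), sizeOf S ≤ n → Good S := by
  intro n
  induction n with
  | zero => intro S h; cases S <;> simp at h
  | succ n ih =>
    intro S hS
    cases S with
    | fm A => exact good_fm A
    | negFm A => exact good_negFm A
    | seq Γ T =>
      refine good_seq Γ T ?_
      intro U hU
      rcases List.mem_cons.1 hU with rfl | hU
      · refine ih U ?_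
        simp at hS; omega
      · have := List.sizeOf_lt_of_mem hU
        refine ih U ?_
        simp at hS; omega
    | negSeq Γ T =>
      refine good_negSeq Γ T ?_
      intro U hU
      rcases List.mem_cons.1 hU with rfl | hU
      · refine ih U ?_
        simp at hS; omega
      · have := List.sizeOf_lt_of_mem hU
        refine ih U ?_
        simp at hS; omega

end Aux

/-- Theorem 4: `⊢ S̄ ⇔ˢ S` in `SC∞` for every R-expression `S`. -/
theorem bar_strictly_equiv (S : RExpr) :
    StrictEquiv ∅ (.fm (bar S)) S :=
  good_all (sizeOf S) S le_rfl
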